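/- There exist two simple curves γ₁, γ₂ in the unit disc ending at the same boundary point such that γ₁ ∼ γ₂ (i.e., γ₂ lies in a bounded hyperbolic neighbourhood of γ₁) but the Fréchet distance between γ₁ and γ₂ in the hyperbolic metric is infinite. -/

import Mathlib

/-
Take `γ₁ = [0, 1)` and let `γ₂` run alongside it, within hyperbolic distance `log 3`, with real
part at hyperbolic distance `ρ(t) = (2 + sin θ) θ`, `θ = 1 / (1 - t)`, from the origin. Read in
the parameters, a homeomorphism `γ₁ → γ₂` is a continuous bijection of `[0, 1)`, hence increasing.
If it moved points by at most `M`, the distance to the origin along `γ₁`, which increases, would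
stay within `M + log 3` of `ρ`; but `ρ` falls from `3θ` to `θ + π` within half a period, for
arbitrarily large `θ`.
-/

open Complex Set Filter Topology

noncomputable section

def unitDisc : Set ℂ := {z : ℂ | ‖z‖ < 1}

def dph (z w : ℂ) : ℝ := ‖(z - w) / (1 - z * (starRingEnd ℂ) w)‖

def dhyp (z w : ℂ) : ℝ := Real.log ((1 + dph z w) / (1 - dph z w))

def phiM (w z : ℂ) : ℂ := (z + w) / (1 + z * (starRingEnd ℂ) w)

/-- Curvilinear angle along `γ` with hyperbolic deflection `r`. -/
def DeltaH (r : ℝ) (γ : Set ℂ) : Set ℂ := ⋃ w ∈ γ, {z ∈ unitDisc | dhyp z w ≤ r}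

/-- A simple curve in the unit disc terminating at the boundary point `p`. -/
structure SimpleCurve (p : ℂ) where
  toFun : ℝ → ℂ
  cont : ContinuousOn toFun (Set.Ico 0 1)
  inj : Set.InjOn toFun (Set.Ico 0 1)
  inDisc : ∀ t ∈ Set.Ico (0:ℝ) 1, toFun t ∈ unitDisc
  tends : Filter.Tendsto toFun (nhdsWithin 1 (Set.Ico 0 1)) (nhds p)

def SimpleCurve.carrier {p : ℂ} (γ : SimpleCurve p) : Set ℂ := γ.toFun '' Set.Ico 0 1

namespace Real

theorem artanh_add_artanh {a b : ℝ} (ha : a ∈ Ioo (-1) 1) (hb : b ∈ Ioo (-1) 1) :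
    artanh a + artanh b = artanh ((a + b) / (1 + a * b)) := by
  obtain ⟨ha₁, ha₂⟩ := ha
  obtain ⟨hb₁, hb₂⟩ := hb
  have hden : 0 < 1 + a * b := by nlinarith
  have hsum : (a + b) / (1 + a * b) ∈ Icc (-1) 1 := by
    rw [mem_Icc, le_div_iff₀ hden, div_le_one hden]
    constructor <;> nlinarith
  rw [artanh_eq_half_log (Ioo_subset_Icc_self ⟨ha₁, ha₂⟩),
    artanh_eq_half_log (Ioo_subset_Icc_self ⟨hb₁, hb₂⟩), artanh_eq_half_log hsum, ← mul_add,
    ← log_mul (div_pos (by linarith) (by linarith)).ne' (div_pos (by linarith) (by linarith)).ne']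
  have h₁ : 1 - a ≠ 0 := by linarith
  have h₂ : 1 - b ≠ 0 := by linarith
  have h₃ : 1 + a * b - (a + b) ≠ 0 := by nlinarith
  congr 2
  rw [div_mul_div_comm, one_add_div hden.ne', one_sub_div hden.ne',
    div_div_div_cancel_right₀ hden.ne', div_eq_div_iff (mul_ne_zero h₁ h₂) h₃]
  ring

end Real

lemma dph_nonneg (z w : ℂ) : 0 ≤ dph z w := norm_nonneg _

lemma dph_zero_left (w : ℂ) : dph 0 w = ‖w‖ := by simp [dph]

lemma dph_comm (z w : ℂ) : dph z w = dph w z := by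
  rw [dph, dph, norm_div, norm_div, norm_sub_rev,
    ← Complex.norm_conj (1 - w * (starRingEnd ℂ) z)]
  simp [mul_comm]

lemma dhyp_comm (z w : ℂ) : dhyp z w = dhyp w z := by rw [dhyp, dhyp, dph_comm]

lemma dhyp_eq_two_mul_artanh {z w : ℂ} (h : dph z w ≤ 1) :
    dhyp z w = 2 * Real.artanh (dph z w) := by
  rw [dhyp, Real.artanh_eq_half_log ⟨by linarith [dph_nonneg z w], h⟩]
  ring

lemma norm_one_sub_mul_conj_sq (z w : ℂ) :
    ‖1 - z * (starRingEnd ℂ) w‖ ^ 2 = ‖z - w‖ ^ 2 + (1 - ‖z‖ ^ 2) * (1 - ‖w‖ ^ 2) := by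
  simp only [Complex.sq_norm, Complex.normSq_apply, sub_re, one_re, mul_re, conj_re, conj_im,
    sub_im, one_im, mul_im]
  ring

section UnitDisc

variable {z w : ℂ}

lemma norm_sub_lt_norm_one_sub_mul_conj (hz : ‖z‖ < 1) (hw : ‖w‖ < 1) :
    ‖z - w‖ < ‖1 - z * (starRingEnd ℂ) w‖ := by
  have hP : 0 < (1 - ‖z‖ ^ 2) * (1 - ‖w‖ ^ 2) := by
    have := norm_nonneg z; have := norm_nonneg w
    exact mul_pos (by nlinarith) (by nlinarith)
  rw [← sq_lt_sq₀ (norm_nonneg _) (norm_nonneg _), norm_one_sub_mul_conj_sq]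
  linarith

lemma dph_lt_one (hz : ‖z‖ < 1) (hw : ‖w‖ < 1) : dph z w < 1 := by
  have h := norm_sub_lt_norm_one_sub_mul_conj hz hw
  rw [dph, norm_div, div_lt_one ((norm_nonneg _).trans_lt h)]
  exact h

lemma norm_mul_one_add_mul_dph_le (hz : ‖z‖ < 1) (hw : ‖w‖ < 1) :
    ‖w‖ * (1 + ‖z‖ * dph z w) ≤ ‖z‖ + dph z w := by
  set A := ‖z - w‖
  set B := ‖1 - z * (starRingEnd ℂ) w‖
  have hB : 0 < B := (norm_nonneg _).trans_lt (norm_sub_lt_norm_one_sub_mul_conj hz hw)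
  have hab : 0 ≤ 1 - ‖z‖ * ‖w‖ := by nlinarith [norm_nonneg z, norm_nonneg w]
  -- `B² = A² + (1 - ‖z‖²)(1 - ‖w‖²)` reduces the chord inequality to `|‖w‖ - ‖z‖| ≤ A`.
  have hchord : |‖w‖ - ‖z‖| * B ≤ (1 - ‖z‖ * ‖w‖) * A := by
    rw [← sq_le_sq₀ (by positivity) (by positivity), mul_pow, mul_pow, norm_one_sub_mul_conj_sq,
      sq_abs]
    have hA : (‖w‖ - ‖z‖) ^ 2 ≤ A ^ 2 := by
      have h := abs_norm_sub_norm_le w z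
      rw [norm_sub_rev] at h
      rw [← sq_abs]
      exact pow_le_pow_left₀ (abs_nonneg _) h 2
    nlinarith [mul_nonneg (sub_nonneg.2 hA)
      (mul_nonneg (sub_nonneg.2 (show ‖z‖ ^ 2 ≤ 1 by nlinarith [norm_nonneg z]))
        (sub_nonneg.2 (show ‖w‖ ^ 2 ≤ 1 by nlinarith [norm_nonneg w])))]
  have hd : dph z w = A / B := by rw [dph, norm_div]
  have : ‖w‖ - ‖z‖ ≤ (1 - ‖z‖ * ‖w‖) * dph z w := by
    rw [hd, ← mul_div_assoc, le_div_iff₀ hB]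
    exact (mul_le_mul_of_nonneg_right (le_abs_self _) hB.le).trans hchord
  linarith

lemma dhyp_zero_left (hw : ‖w‖ ≤ 1) : dhyp 0 w = 2 * Real.artanh ‖w‖ := by
  rw [dhyp_eq_two_mul_artanh (by rwa [dph_zero_left]), dph_zero_left]

lemma norm_ofReal_lt_one {s : ℝ} (hs : s ∈ Ico 0 1) : ‖(s : ℂ)‖ < 1 := by
  rw [Complex.norm_real, Real.norm_of_nonneg hs.1]
  exact hs.2

lemma monotoneOn_dhyp_zero_ofReal : MonotoneOn (fun s : ℝ => dhyp 0 s) (Ico 0 1) := by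
  intro s hs s' hs' hss'
  dsimp only
  rw [dhyp_zero_left (norm_ofReal_lt_one hs).le, dhyp_zero_left (norm_ofReal_lt_one hs').le,
    Complex.norm_real, Complex.norm_real, Real.norm_of_nonneg hs.1, Real.norm_of_nonneg hs'.1]
  gcongr 2 * ?_
  exact Real.artanh_le_artanh (by linarith [hs.1]) hs'.2 hss'

lemma dhyp_zero_le_add (hz : ‖z‖ < 1) (hw : ‖w‖ < 1) : dhyp 0 w ≤ dhyp 0 z + dhyp z w := by
  have hd₀ := dph_nonneg z w
  have hd₁ := dph_lt_one hz hw
  have hz₀ := norm_nonneg z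
  have hden : 0 < 1 + ‖z‖ * dph z w := by positivity
  rw [dhyp_zero_left hw.le, dhyp_zero_left hz.le, dhyp_eq_two_mul_artanh hd₁.le, ← mul_add,
    Real.artanh_add_artanh ⟨by linarith, hz⟩ ⟨by linarith, hd₁⟩]
  gcongr 2 * ?_
  refine Real.artanh_le_artanh (by linarith [norm_nonneg w]) ?_ ?_
  · rw [div_lt_one hden]; nlinarith
  · rw [le_div_iff₀ hden]; exact norm_mul_one_add_mul_dph_le hz hw

lemma abs_dhyp_zero_sub_le (hz : ‖z‖ < 1) (hw : ‖w‖ < 1) : |dhyp 0 z - dhyp 0 w| ≤ dhyp z w := by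
  rw [abs_sub_le_iff]
  constructor
  · linarith [dhyp_zero_le_add hw hz, dhyp_comm z w]
  · linarith [dhyp_zero_le_add hz hw]

end UnitDisc

theorem Continuous.strictMono_of_inj_of_isBot {α δ : Type*} [ConditionallyCompleteLinearOrder α]
    [TopologicalSpace α] [OrderTopology α] [DenselyOrdered α] [LinearOrder δ] [TopologicalSpace δ]
    [OrderClosedTopology δ] {f : α → δ} (hf : Continuous f) (hinj : Function.Injective f) {a b : α}
    (ha : IsBot a) (hab : f a < f b) : StrictMono f :=
  (hf.strictMono_of_inj hinj).resolve_right fun hanti => ((hanti.antitone (ha b)).not_gt hab)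

def SimpleCurve.toCarrier {p : ℂ} (γ : SimpleCurve p) (t : Ico (0:ℝ) 1) : γ.carrier :=
  ⟨γ.toFun t, mem_image_of_mem _ t.2⟩

lemma SimpleCurve.continuous_toCarrier {p : ℂ} (γ : SimpleCurve p) : Continuous γ.toCarrier :=
  γ.cont.domRestrict.subtype_mk _

lemma SimpleCurve.bijective_toCarrier {p : ℂ} (γ : SimpleCurve p) :
    Function.Bijective γ.toCarrier :=
  ⟨fun s t h => Subtype.ext (γ.inj s.2 t.2 (congrArg Subtype.val h)),
    fun ⟨_, t, ht, rfl⟩ => ⟨⟨t, ht⟩, rfl⟩⟩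

def unitRadius : SimpleCurve 1 where
  toFun t := t
  cont := Complex.continuous_ofReal.continuousOn
  inj _ _ _ _ h := Complex.ofReal_injective h
  inDisc _ := norm_ofReal_lt_one
  tends := by simpa using (Complex.continuous_ofReal.tendsto 1).mono_left nhdsWithin_le_nhds

lemma mem_unitRadius_carrier {z : ℂ} (hz : z ∈ unitRadius.carrier) :
    (z.re : ℂ) = z ∧ z.re ∈ Ico 0 1 := by
  obtain ⟨t, ht, rfl⟩ := hz
  simpa [unitRadius] using ht

lemma ofReal_mem_unitRadius_carrier {s : ℝ} (hs : s ∈ Ico 0 1) : (s : ℂ) ∈ unitRadius.carrier :=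
  ⟨s, hs, rfl⟩

lemma SimpleCurve.exists_strictMono_reparam {p : ℂ} {γ : SimpleCurve p}
    (e : unitRadius.carrier ≃ₜ γ.carrier) :
    ∃ σ : Ico (0:ℝ) 1 → ℝ, StrictMono σ ∧
      ∀ t, σ t ∈ Ico 0 1 ∧ (e.symm (γ.toCarrier t) : ℂ) = σ t := by
  set σ : Ico (0:ℝ) 1 → ℝ := fun t => (e.symm (γ.toCarrier t) : ℂ).re
  have hσ t : σ t ∈ Ico 0 1 ∧ (e.symm (γ.toCarrier t) : ℂ) = σ t :=
    (mem_unitRadius_carrier (e.symm (γ.toCarrier t)).2).symm.imp_right Eq.symm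
  refine ⟨σ, ?_, hσ⟩
  have hinj : Function.Injective σ := by
    intro s t hst
    refine γ.bijective_toCarrier.1 (e.symm.injective (Subtype.ext ?_))
    rw [(hσ s).2, (hσ t).2, hst]
  let t₀ : Ico (0:ℝ) 1 := ⟨0, le_rfl, one_pos⟩
  have : Inhabited (Ico (0:ℝ) 1) := ⟨t₀⟩
  -- Since `σ` is onto `[0, 1)`, it takes a value above `σ t₀`, so it cannot be decreasing.
  obtain ⟨hσ₀, hσ₁⟩ := (hσ t₀).1
  set s := (σ t₀ + 1) / 2 with hs_def
  have hs : s ∈ Ico 0 1 := ⟨by linarith, by linarith⟩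
  obtain ⟨t, ht⟩ := γ.bijective_toCarrier.2 (e ⟨s, ofReal_mem_unitRadius_carrier hs⟩)
  have hσt : σ t = s := by simp [σ, ht]
  refine Continuous.strictMono_of_inj_of_isBot ?_ hinj (a := t₀) (b := t) (fun u => u.2.1) ?_
  · exact Complex.continuous_re.comp (continuous_subtype_val.comp
      (e.symm.continuous.comp γ.continuous_toCarrier))
  · rw [hσt]; linarith

def radialPoint (u : ℝ) : ℝ := 1 - 2 / (Real.exp u + 1)

lemma radialPoint_mem_Ico {u : ℝ} (hu : 0 ≤ u) : radialPoint u ∈ Ico 0 1 := by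
  have : 0 < 2 / (Real.exp u + 1) := by positivity
  refine ⟨?_, by rw [radialPoint]; linarith⟩
  rw [radialPoint, sub_nonneg, div_le_one (by positivity)]
  linarith [Real.one_le_exp hu]

lemma dhyp_zero_radialPoint {u : ℝ} (hu : 0 ≤ u) : dhyp 0 (radialPoint u) = u := by
  have hx := radialPoint_mem_Ico hu
  rw [dhyp, dph_zero_left, Complex.norm_real, Real.norm_of_nonneg hx.1, ← Real.exp_eq_exp,
    Real.exp_log, radialPoint]
  · field_simp
    ring
  · exact div_pos (by linarith [hx.1]) (by linarith [hx.2])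

lemma continuous_radialPoint : Continuous radialPoint :=
  continuous_const.sub (continuous_const.div (by fun_prop) fun u => by positivity)

lemma tendsto_radialPoint_atTop : Tendsto radialPoint atTop (𝓝 1) := by
  have h : Tendsto (fun u => Real.exp u + 1) atTop atTop :=
    Real.tendsto_exp_atTop.atTop_add tendsto_const_nhds
  have := (h.inv_tendsto_atTop.const_mul 2).const_sub 1
  rw [mul_zero, sub_zero] at this
  exact this.congr fun u => by simp [radialPoint, div_eq_mul_inv]

def wiggleRadius (t : ℝ) : ℝ := (2 + Real.sin (1 / (1 - t))) / (1 - t)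

def wiggleRe (t : ℝ) : ℝ := radialPoint (wiggleRadius t)

-- The factor `1 - x²` keeps `γ₂` within pseudo-hyperbolic distance `1/2` of its real part `x`,
-- the factor `1 - t` makes `γ₂` injective.
def wiggleIm (t : ℝ) : ℝ := (1 - wiggleRe t ^ 2) * (1 - t) / 2

def wiggleFun (t : ℝ) : ℂ := wiggleRe t + wiggleIm t * I

section Wiggle

variable {t : ℝ}

lemma inv_one_sub_le_wiggleRadius (ht : t ∈ Ico 0 1) : (1 - t)⁻¹ ≤ wiggleRadius t := by
  rw [wiggleRadius, inv_eq_one_div]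
  gcongr
  · linarith [ht.2]
  · linarith [Real.neg_one_le_sin (1 / (1 - t))]

lemma wiggleRadius_nonneg (ht : t ∈ Ico 0 1) : 0 ≤ wiggleRadius t :=
  (inv_nonneg.2 (sub_nonneg.2 ht.2.le)).trans (inv_one_sub_le_wiggleRadius ht)

lemma continuousOn_wiggleRadius : ContinuousOn wiggleRadius (Ico 0 1) := by
  have h : ∀ t ∈ Ico (0:ℝ) 1, 1 - t ≠ 0 := fun t ht => (sub_pos.2 ht.2).ne'
  unfold wiggleRadius
  fun_prop (disch := assumption)

lemma tendsto_wiggleRadius : Tendsto wiggleRadius (𝓝[Ico 0 1] 1) atTop := by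
  have h : Tendsto (fun t : ℝ => 1 - t) (𝓝[Ico 0 1] 1) (𝓝[>] 0) := by
    refine tendsto_nhdsWithin_iff.2 ⟨?_, eventually_nhdsWithin_of_forall fun t ht => sub_pos.2 ht.2⟩
    have : Tendsto (fun t : ℝ => 1 - t) (𝓝 1) (𝓝 (1 - 1)) := tendsto_const_nhds.sub tendsto_id
    rw [sub_self] at this
    exact this.mono_left nhdsWithin_le_nhds
  exact tendsto_atTop_mono' _ (eventually_nhdsWithin_of_forall fun t ht =>
    inv_one_sub_le_wiggleRadius ht) (tendsto_inv_nhdsGT_zero.comp h)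

lemma wiggleRadius_one_sub_inv (θ : ℝ) :
    wiggleRadius (1 - θ⁻¹) = (2 + Real.sin θ) * θ := by
  simp [wiggleRadius, div_eq_mul_inv]

lemma one_sub_inv_mem_Ico {θ : ℝ} (hθ : 1 ≤ θ) : 1 - θ⁻¹ ∈ Ico 0 1 :=
  ⟨sub_nonneg.2 (inv_le_one_of_one_le₀ hθ), sub_lt_self _ (by positivity)⟩

-- At `θ = π/2 + 2πN` the radius `(2 + sin θ) θ` is `3θ`; at `θ + π` it is only `θ + π`.
lemma exists_wiggleRadius_gap (K : ℝ) :
    ∃ s ∈ Ico (0:ℝ) 1, ∃ t ∈ Ico (0:ℝ) 1, s < t ∧ wiggleRadius t + K < wiggleRadius s := by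
  obtain ⟨N, hN⟩ := exists_nat_gt K
  set θ : ℝ := Real.pi / 2 + N * (2 * Real.pi) with hθ
  have hπ := Real.pi_gt_three
  have hN₀ : (0:ℝ) ≤ N := N.cast_nonneg
  have hθ₁ : 1 ≤ θ := by nlinarith
  have hsin : Real.sin θ = 1 := by rw [hθ, Real.sin_add_nat_mul_two_pi, Real.sin_pi_div_two]
  refine ⟨1 - θ⁻¹, one_sub_inv_mem_Ico hθ₁, 1 - (θ + Real.pi)⁻¹, one_sub_inv_mem_Ico (by linarith),
    sub_lt_sub_left (inv_strictAnti₀ (by linarith) (by linarith)) 1, ?_⟩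
  rw [wiggleRadius_one_sub_inv, wiggleRadius_one_sub_inv, Real.sin_add_pi, hsin]
  nlinarith

lemma wiggleRe_mem_Ico (ht : t ∈ Ico 0 1) : wiggleRe t ∈ Ico 0 1 :=
  radialPoint_mem_Ico (wiggleRadius_nonneg ht)

lemma dhyp_zero_wiggleRe (ht : t ∈ Ico 0 1) : dhyp 0 (wiggleRe t) = wiggleRadius t :=
  dhyp_zero_radialPoint (wiggleRadius_nonneg ht)

lemma one_sub_wiggleRe_sq_pos (ht : t ∈ Ico 0 1) : 0 < 1 - wiggleRe t ^ 2 := by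
  have hx := wiggleRe_mem_Ico ht
  nlinarith [hx.1, hx.2]

lemma norm_wiggleFun_lt_one (ht : t ∈ Ico 0 1) : ‖wiggleFun t‖ < 1 := by
  have hx := wiggleRe_mem_Ico ht
  have hy : 0 ≤ wiggleIm t :=
    div_nonneg (mul_nonneg (one_sub_wiggleRe_sq_pos ht).le (sub_nonneg.2 ht.2.le)) zero_le_two
  have hlt : wiggleIm t < 1 - wiggleRe t := by
    rw [wiggleIm]
    nlinarith [hx.1, hx.2, ht.1, ht.2, mul_pos (sub_pos.2 hx.2) (sub_pos.2 ht.2)]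
  calc ‖wiggleFun t‖ ≤ |(wiggleFun t).re| + |(wiggleFun t).im| :=
        Complex.norm_le_abs_re_add_abs_im _
    _ = wiggleRe t + wiggleIm t := by simp [wiggleFun, abs_of_nonneg hx.1, abs_of_nonneg hy]
    _ < 1 := by linarith

lemma dph_wiggleFun_wiggleRe_le (ht : t ∈ Ico 0 1) : dph (wiggleFun t) (wiggleRe t) ≤ 1 / 2 := by
  have hP := one_sub_wiggleRe_sq_pos ht
  have hy : 0 ≤ wiggleIm t := div_nonneg (mul_nonneg hP.le (sub_nonneg.2 ht.2.le)) zero_le_two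
  have hnum : ‖wiggleFun t - wiggleRe t‖ = wiggleIm t := by
    simp [wiggleFun, abs_of_nonneg hy]
  have hden : 1 - wiggleRe t ^ 2 ≤ ‖1 - wiggleFun t * (starRingEnd ℂ) (wiggleRe t)‖ :=
    le_of_eq_of_le (by simp [wiggleFun, sq]) (Complex.re_le_norm _)
  calc dph (wiggleFun t) (wiggleRe t) ≤ wiggleIm t / (1 - wiggleRe t ^ 2) := by
        rw [dph, norm_div, hnum]; gcongr
    _ = (1 - t) / 2 := by rw [wiggleIm]; field_simp
    _ ≤ 1 / 2 := by linarith [ht.1]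

lemma dhyp_wiggleFun_wiggleRe_le (ht : t ∈ Ico 0 1) :
    dhyp (wiggleFun t) (wiggleRe t) ≤ Real.log 3 := by
  have hd := dph_wiggleFun_wiggleRe_le ht
  have hd₀ := dph_nonneg (wiggleFun t) (wiggleRe t)
  rw [dhyp]
  gcongr
  · exact div_pos (by linarith) (by linarith)
  · rw [div_le_iff₀ (by linarith)]; linarith

lemma continuousOn_wiggleFun : ContinuousOn wiggleFun (Ico 0 1) := by
  have hx : ContinuousOn wiggleRe (Ico 0 1) :=
    continuous_radialPoint.comp_continuousOn continuousOn_wiggleRadius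
  unfold wiggleFun wiggleIm
  fun_prop

lemma injOn_wiggleFun : InjOn wiggleFun (Ico 0 1) := by
  intro s hs t ht hst
  have hre : wiggleRe s = wiggleRe t := by simpa [wiggleFun] using congrArg Complex.re hst
  have him : wiggleIm s = wiggleIm t := by simpa [wiggleFun] using congrArg Complex.im hst
  rw [wiggleIm, wiggleIm, hre] at him
  have := one_sub_wiggleRe_sq_pos ht
  have : 1 - s = 1 - t := by
    apply mul_left_cancel₀ this.ne'
    linarith
  linarith

lemma tendsto_wiggleFun : Tendsto wiggleFun (𝓝[Ico 0 1] 1) (𝓝 1) := by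
  have hx : Tendsto wiggleRe (𝓝[Ico 0 1] 1) (𝓝 1) :=
    tendsto_radialPoint_atTop.comp tendsto_wiggleRadius
  have ht : Tendsto (fun t : ℝ => t) (𝓝[Ico 0 1] 1) (𝓝 1) :=
    tendsto_nhdsWithin_of_tendsto_nhds tendsto_id
  have hy : Tendsto wiggleIm (𝓝[Ico 0 1] 1) (𝓝 0) := by
    have := ((tendsto_const_nhds (x := (1:ℝ)) |>.sub (hx.pow 2)).mul
      (tendsto_const_nhds (x := (1:ℝ)) |>.sub ht)).div_const 2
    rwa [one_pow, sub_self, zero_mul, zero_div] at this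
  have := ((Complex.continuous_ofReal.tendsto 1).comp hx).add
    (((Complex.continuous_ofReal.tendsto 0).comp hy).mul_const I)
  rwa [Complex.ofReal_one, Complex.ofReal_zero, zero_mul, add_zero] at this

end Wiggle

def wiggle : SimpleCurve 1 where
  toFun := wiggleFun
  cont := continuousOn_wiggleFun
  inj := injOn_wiggleFun
  inDisc _ ht := norm_wiggleFun_lt_one ht
  tends := tendsto_wiggleFun

lemma wiggle_carrier_subset_deltaH : wiggle.carrier ⊆ DeltaH (Real.log 3) unitRadius.carrier := by
  rintro _ ⟨t, ht, rfl⟩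
  exact mem_biUnion (ofReal_mem_unitRadius_carrier (wiggleRe_mem_Ico ht))
    ⟨norm_wiggleFun_lt_one ht, dhyp_wiggleFun_wiggleRe_le ht⟩

theorem stmt_5 : ∃ (p : ℂ), ‖p‖ = 1 ∧ ∃ γ₁ γ₂ : SimpleCurve p,
    (∃ r : ℝ, 0 < r ∧ γ₂.carrier ⊆ DeltaH r γ₁.carrier) ∧
    ¬ ∃ (e : γ₁.carrier ≃ₜ γ₂.carrier) (M : ℝ),
        ∀ z : γ₁.carrier, dhyp (z : ℂ) ((e z : ℂ)) ≤ M := by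
  refine ⟨1, norm_one, unitRadius, wiggle,
    ⟨Real.log 3, Real.log_pos (by norm_num), wiggle_carrier_subset_deltaH⟩, ?_⟩
  rintro ⟨e, M, hM⟩
  obtain ⟨σ, hσ_mono, hσ⟩ := SimpleCurve.exists_strictMono_reparam e
  have hclose (t : Ico (0:ℝ) 1) : |dhyp 0 (σ t) - wiggleRadius t| ≤ M + Real.log 3 := by
    have hdisp : dhyp (σ t) (wiggleFun t) ≤ M := by
      have := hM (e.symm (wiggle.toCarrier t))
      rwa [Homeomorph.apply_symm_apply, (hσ t).2] at this
    rw [← dhyp_zero_wiggleRe t.2]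
    have h₁ := abs_dhyp_zero_sub_le (norm_ofReal_lt_one (hσ t).1) (norm_wiggleFun_lt_one t.2)
    have h₂ := abs_dhyp_zero_sub_le (norm_wiggleFun_lt_one t.2)
      (norm_ofReal_lt_one (wiggleRe_mem_Ico t.2))
    have h₃ := dhyp_wiggleFun_wiggleRe_le t.2
    linarith [abs_sub_le (dhyp 0 (σ t)) (dhyp 0 (wiggleFun t)) (dhyp 0 (wiggleRe t))]
  obtain ⟨s, hs, t, ht, hst, hgap⟩ := exists_wiggleRadius_gap (2 * (M + Real.log 3))
  have hmono : dhyp 0 (σ ⟨s, hs⟩) ≤ dhyp 0 (σ ⟨t, ht⟩) :=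
    monotoneOn_dhyp_zero_ofReal (hσ _).1 (hσ _).1 (hσ_mono hst).le
  have hs_close := abs_le.1 (hclose ⟨s, hs⟩)
  have ht_close := abs_le.1 (hclose ⟨t, ht⟩)
  linarith [hs_close.1, ht_close.2]

end
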